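/- arXiv:0904.4225 — 2 statements merged into one kernel-verified Lean document; each statement's English description precedes it below -/
import Mathlib

section
/- Let n, m be positive integers, Q_m f = f'' + ((n−1+2m)/r)·f', and let p be an integer with 0 ≤ p ≤ m−1. Set Ψ_p(r) = r^{-n-2p}. Then for every integer l with 0 ≤ l ≤ m−1−p there is a nonzero constant C_l such that the l-th iterate satisfies Q_m^l Ψ_p (r) = C_l · r^{-n-2(p+l)} for all r > 0, and for every integer l with m−p ≤ l, Q_m^l Ψ_p is identically zero on (0,∞). -/
/-- The second-order operator `Q_m f = f'' + ((n-1+2m)/r)·f'`. -/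
noncomputable def Qop (n m : ℕ) (f : ℝ → ℝ) : ℝ → ℝ :=
  fun r => deriv (deriv f) r + (((n : ℝ) - 1 + 2 * (m : ℝ)) / r) * deriv f r

/-!
On `(0,∞)`, `Q_m` maps `C r^a` to `C a (a+n+2m-2) r^(a-2)`. Iterating from `a = -n-2p`, the
`i`-th step contributes the factor `(-n-2(p+i)) (2(m-1-p-i))`; the first one never vanishes
since `n ≥ 1`, the second one vanishes exactly at `i = m-1-p`, after which the iterates stay `0`.
-/

open Set Finset

lemma deriv_eqOn_rpow {f : ℝ → ℝ} {C a : ℝ} (hf : EqOn f (fun s => C * s ^ a) (Ioi 0)) :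
    EqOn (deriv f) (fun s => C * a * s ^ (a - 1)) (Ioi 0) := by
  intro r hr
  rw [(hf.eventuallyEq_of_mem (Ioi_mem_nhds hr)).deriv_eq,
    ((Real.hasDerivAt_rpow_const (p := a) (Or.inl (ne_of_gt hr))).const_mul C).deriv]
  ring

lemma Qop_eqOn_rpow (n m : ℕ) {f : ℝ → ℝ} {C a : ℝ} (hf : EqOn f (fun s => C * s ^ a) (Ioi 0)) :
    EqOn (Qop n m f) (fun s => C * (a * (a + n + 2 * m - 2)) * s ^ (a - 2)) (Ioi 0) := by
  intro r hr
  have hf' := deriv_eqOn_rpow hf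
  simp only [Qop, deriv_eqOn_rpow hf' hr, hf' hr, sub_sub, one_add_one_eq_two]
  rw [Real.rpow_sub hr, Real.rpow_sub hr, Real.rpow_two, Real.rpow_one]
  field_simp
  ring

noncomputable def iterateQopCoeff (n m : ℕ) (a : ℝ) (l : ℕ) : ℝ :=
  ∏ i ∈ range l, (a - 2 * i) * (a - 2 * i + n + 2 * m - 2)

lemma iterate_Qop_eqOn_rpow (n m l : ℕ) (a : ℝ) :
    EqOn ((Qop n m)^[l] (fun s => s ^ a))
      (fun s => iterateQopCoeff n m a l * s ^ (a - 2 * l)) (Ioi 0) := by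
  induction l with
  | zero => intro r _; simp [iterateQopCoeff]
  | succ l ih =>
    intro r hr
    rw [Function.iterate_succ_apply', Qop_eqOn_rpow n m ih hr]
    simp only [iterateQopCoeff, prod_range_succ]
    push_cast
    rw [show a - 2 * l - 2 = a - 2 * (l + 1) by ring, mul_assoc]

lemma iterateQopCoeff_factor (n m p i : ℕ) :
    (-(n : ℝ) - 2 * p - 2 * i) * (-(n : ℝ) - 2 * p - 2 * i + n + 2 * m - 2)
      = -(n + 2 * (p + i)) * (2 * (m - 1 - p - i)) := by
  ring

lemma iterateQopCoeff_ne_zero {n m p l : ℕ} (hn : 1 ≤ n) (hl : p + l < m) :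
    iterateQopCoeff n m (-(n : ℝ) - 2 * p) l ≠ 0 := by
  refine prod_ne_zero_iff.mpr fun i hi => ?_
  have hi : (p : ℝ) + i + 2 ≤ m := by exact_mod_cast (by grind : p + i + 2 ≤ m)
  have hn : (1 : ℝ) ≤ n := by exact_mod_cast hn
  rw [iterateQopCoeff_factor]
  apply mul_ne_zero <;> nlinarith

lemma iterateQopCoeff_eq_zero {n m p l : ℕ} (hp : p < m) (hl : m ≤ p + l) :
    iterateQopCoeff n m (-(n : ℝ) - 2 * p) l = 0 := by
  refine prod_eq_zero (i := m - 1 - p) (mem_range.mpr (by omega)) ?_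
  rw [iterateQopCoeff_factor, Nat.cast_sub (by omega), Nat.cast_sub (by omega), Nat.cast_one]
  ring

/-- For `Ψ_p(r) = r^(-n-2p)` with `0 ≤ p ≤ m-1`: for `0 ≤ l ≤ m-1-p` there is a
nonzero constant `C_l` with `Q_m^l Ψ_p = C_l · r^(-n-2(p+l))` on `(0,∞)`, and for
`l ≥ m-p` the iterate `Q_m^l Ψ_p` vanishes identically on `(0,∞)`. -/
theorem stmt_4 (n m : ℕ) (hn : 1 ≤ n) (hm : 1 ≤ m) (p : ℕ) (hp : p ≤ m - 1) :
    (∀ l : ℕ, l ≤ m - 1 - p →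
      ∃ C : ℝ, C ≠ 0 ∧ ∀ r : ℝ, 0 < r →
        (Qop n m)^[l] (fun s : ℝ => s ^ (-(n : ℝ) - 2 * (p : ℝ))) r
          = C * r ^ (-(n : ℝ) - 2 * ((p : ℝ) + (l : ℝ)))) ∧
    (∀ l : ℕ, m - p ≤ l → ∀ r : ℝ, 0 < r →
      (Qop n m)^[l] (fun s : ℝ => s ^ (-(n : ℝ) - 2 * (p : ℝ))) r = 0) := by
  have hΨ := iterate_Qop_eqOn_rpow n m (a := -(n : ℝ) - 2 * p)
  constructor
  · intro l hl
    refine ⟨_, iterateQopCoeff_ne_zero (m := m) (p := p) (l := l) hn (by omega), fun r hr => ?_⟩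
    rw [hΨ l hr, mul_add, ← sub_sub]
  · intro l hl r hr
    rw [hΨ l hr]
    dsimp only
    rw [iterateQopCoeff_eq_zero (by omega) (by omega), zero_mul]
end

section
/- Let m ≥ 1, n ≥ 1 be integers. For 0 ≤ p ≤ m−1 define Ψ_p(r) = r^{-n-2p} and let v_p ∈ ℝ^{2m} be the vector of derivatives v_p = (Ψ_p(1), Ψ_p'(1), …, Ψ_p^{(2m−1)}(1)). Let Q_m f = f'' + ((n−1+2m)/r)·f', and for 0 ≤ l ≤ m−1 let B_l ∈ ℝ^{2m} be the coefficient vector so that (Q_m^l f)(1) = ⟨B_l, (f(1), f'(1), …, f^{(2m−1)}(1))⟩ for all smooth f. Then ⟨B_j, v_p⟩ = 0 for 0 ≤ j ≤ p−1 and ⟨B_p, v_p⟩ ≠ 0. -/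
open Polynomial Finset

lemma deriv_cpow (C b : ℝ) {r : ℝ} (hr : 0 < r) :
    deriv (fun x : ℝ => C * x ^ b) r = C * b * r ^ (b - 1) := by
  have h : HasDerivAt (fun x : ℝ => C * x ^ b) (C * (b * r ^ (b - 1))) r :=
    (Real.hasDerivAt_rpow_const (Or.inl hr.ne')).const_mul C
  rw [h.deriv]; ring

lemma qop_cpow (n m : ℕ) (C b : ℝ) {r : ℝ} (hr : 0 < r) :
    Qop n m (fun x : ℝ => C * x ^ b) r
      = (C * (b * (b + n - 2 + 2 * m))) * r ^ (b - 2) := by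
  have hev : deriv (fun x : ℝ => C * x ^ b) =ᶠ[nhds r]
      (fun x : ℝ => (C * b) * x ^ (b - 1)) := by
    filter_upwards [isOpen_Ioi.eventually_mem hr] with x hx
    rw [deriv_cpow C b (Set.mem_Ioi.mp hx)]
  have h1 : deriv (fun x : ℝ => C * x ^ b) r = C * b * r ^ (b - 1) := deriv_cpow C b hr
  have h2 : deriv (deriv (fun x : ℝ => C * x ^ b)) r
      = (C * b) * (b - 1) * r ^ (b - 1 - 1) := by
    rw [hev.deriv_eq]; exact deriv_cpow (C * b) (b - 1) hr
  simp only [Qop, h1, h2]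
  have hb2 : b - 1 - 1 = b - 2 := by ring
  have hb1 : r ^ (b - 1) = r ^ (b - 2) * r := by
    rw [← Real.rpow_add_one hr.ne']
    congr 1
    ring
  rw [hb2, hb1]
  field_simp
  ring

/-- iterated derivative of a power function on the positive axis -/
lemma iteratedDeriv_cpow (b : ℝ) :
    ∀ k : ℕ, ∀ r : ℝ, 0 < r →
      iteratedDeriv k (fun x : ℝ => x ^ b) r
        = (∏ t ∈ range k, (b - t)) * r ^ (b - k) := by
  intro k
  induction k with
  | zero => intro r hr; simp
  | succ k ih =>
    intro r hr
    rw [iteratedDeriv_succ]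
    have hev : iteratedDeriv k (fun x : ℝ => x ^ b) =ᶠ[nhds r]
        (fun x => (∏ t ∈ range k, (b - t)) * x ^ (b - k)) := by
      filter_upwards [isOpen_Ioi.eventually_mem hr] with x hx
      exact ih x (Set.mem_Ioi.mp hx)
    rw [hev.deriv_eq, deriv_cpow _ _ hr, prod_range_succ]
    have : b - (k : ℝ) - 1 = b - ((k : ℕ) + 1 : ℕ) := by push_cast; ring
    rw [this]

/-- iterates of `Qop` on a power function on the positive axis -/
lemma qop_iter_cpow (n m : ℕ) (b : ℝ) :
    ∀ l : ℕ, ∀ r : ℝ, 0 < r →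
      (Qop n m)^[l] (fun x : ℝ => x ^ b) r
        = (∏ i ∈ range l, ((b - 2 * i) * (b - 2 * i + n - 2 + 2 * m)))
            * r ^ (b - 2 * l) := by
  intro l
  induction l with
  | zero => intro r hr; simp
  | succ l ih =>
    intro r hr
    rw [Function.iterate_succ_apply']
    have hev : (Qop n m)^[l] (fun x : ℝ => x ^ b) =ᶠ[nhds r]
        (fun x => (∏ i ∈ range l, ((b - 2 * i) * (b - 2 * i + n - 2 + 2 * m)))
            * x ^ (b - 2 * l)) := by
      filter_upwards [isOpen_Ioi.eventually_mem hr] with x hx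
      exact ih x (Set.mem_Ioi.mp hx)
    have hq : ∀ f g : ℝ → ℝ, f =ᶠ[nhds r] g → Qop n m f r = Qop n m g r := by
      intro f g h
      have hd : deriv f =ᶠ[nhds r] deriv g := h.deriv
      simp only [Qop, hd.deriv.self_of_nhds, hd.self_of_nhds]
    rw [hq _ _ hev, qop_cpow n m _ _ hr, prod_range_succ]
    have h2 : b - 2 * (l : ℝ) - 2 = b - 2 * ((l : ℕ) + 1 : ℕ) := by push_cast; ring
    rw [← h2]

/-- For `0 ≤ p ≤ m-1`, set `Ψ_p(r) = r^(-n-2p)` and let `v_p` be the vector of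
its first `2m` derivatives at `r = 1`. Let `B_l` be the coefficient vector of
the linear functional `f ↦ (Q_m^l f)(1)` on `2m`-jets at `1`. Then
`⟨B_j, v_p⟩ = (Q_m^j Ψ_p)(1)`, which vanishes for `j ≥ m - p` and is nonzero
for `j ≤ m - 1 - p`. -/
theorem stmt_17 (n m : ℕ) (hn : 1 ≤ n) (hm : 1 ≤ m) (p : ℕ) (hp : p ≤ m - 1)
    (B : Fin m → Fin (2 * m) → ℝ)
    (hB : ∀ l : Fin m, ∀ f : ℝ → ℝ, ContDiff ℝ (⊤ : ℕ∞) f →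
      (Qop n m)^[(l : ℕ)] f 1
        = ∑ j : Fin (2 * m), B l j * iteratedDeriv (j : ℕ) f 1) :
    let Ψ : ℝ → ℝ := fun r => r ^ (-(n : ℝ) - 2 * (p : ℝ))
    let v : Fin (2 * m) → ℝ := fun j => iteratedDeriv (j : ℕ) Ψ 1
    (∀ j : Fin m, ∑ k : Fin (2 * m), B j k * v k = (Qop n m)^[(j : ℕ)] Ψ 1) ∧
    (∀ j : Fin m, m - p ≤ (j : ℕ) → ∑ k : Fin (2 * m), B j k * v k = 0) ∧
    (∀ j : Fin m, (j : ℕ) ≤ m - 1 - p → ∑ k : Fin (2 * m), B j k * v k ≠ 0) := by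
  intro Ψ v
  set a : ℝ := -(n : ℝ) - 2 * (p : ℝ) with ha
  -- value of v
  have hv : ∀ k : Fin (2 * m), v k = ∏ t ∈ range (k : ℕ), (a - t) := by
    intro k
    show iteratedDeriv (k : ℕ) (fun r : ℝ => r ^ a) 1 = _
    rw [iteratedDeriv_cpow a (k : ℕ) 1 one_pos, Real.one_rpow, mul_one]
  -- the polynomial identity
  have main : ∀ j : Fin m,
      ∑ k : Fin (2 * m), B j k * ∏ t ∈ range (k : ℕ), (a - t)
        = ∏ i ∈ range (j : ℕ), ((a - 2 * i) * (a - 2 * i + n - 2 + 2 * m)) := by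
    intro j
    set L : ℝ[X] := ∑ k : Fin (2 * m), C (B j k) * ∏ t ∈ range (k : ℕ), (X - C (t : ℝ))
      with hL
    set R : ℝ[X] := ∏ i ∈ range (j : ℕ),
        ((X - C (2 * (i : ℝ))) * (X - C (2 * (i : ℝ)) + C ((n : ℝ) - 2 + 2 * (m : ℝ))))
      with hR
    have hLeval : ∀ x : ℝ, L.eval x
        = ∑ k : Fin (2 * m), B j k * ∏ t ∈ range (k : ℕ), (x - t) := by
      intro x
      simp [hL, eval_finset_sum, eval_prod]
    have hReval : ∀ x : ℝ, R.eval x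
        = ∏ i ∈ range (j : ℕ), ((x - 2 * i) * (x - 2 * i + n - 2 + 2 * m)) := by
      intro x
      rw [hR, eval_prod]
      refine Finset.prod_congr rfl fun i _ => ?_
      simp only [eval_mul, eval_add, eval_sub, eval_X, eval_C]
      ring
    have hLR : L = R := by
      apply Polynomial.eq_of_infinite_eval_eq
      apply Set.Infinite.mono (s := Set.range (Nat.cast : ℕ → ℝ))
      · rintro x ⟨s, rfl⟩
        have hpow : (fun x : ℝ => x ^ (s : ℕ)) = (fun x : ℝ => x ^ (s : ℝ)) := by
          funext x; rw [Real.rpow_natCast]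
        have hsm : ContDiff ℝ (⊤ : ℕ∞) (fun x : ℝ => x ^ (s : ℕ)) := contDiff_id.pow s
        have h1 : (Qop n m)^[(j : ℕ)] (fun x : ℝ => x ^ (s : ℕ)) 1
            = ∑ k : Fin (2 * m), B j k * iteratedDeriv (k : ℕ) (fun x : ℝ => x ^ (s : ℕ)) 1 :=
          hB j _ hsm
        have h2 : (Qop n m)^[(j : ℕ)] (fun x : ℝ => x ^ (s : ℕ)) 1
            = ∏ i ∈ range (j : ℕ), (((s : ℝ) - 2 * i) * ((s : ℝ) - 2 * i + n - 2 + 2 * m)) := by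
          rw [hpow, qop_iter_cpow n m (s : ℝ) (j : ℕ) 1 one_pos, Real.one_rpow, mul_one]
        have h3 : ∀ k : Fin (2 * m), iteratedDeriv (k : ℕ) (fun x : ℝ => x ^ (s : ℕ)) 1
            = ∏ t ∈ range (k : ℕ), ((s : ℝ) - t) := by
          intro k
          rw [hpow, iteratedDeriv_cpow (s : ℝ) (k : ℕ) 1 one_pos, Real.one_rpow, mul_one]
        show L.eval ((s : ℝ)) = R.eval ((s : ℝ))
        rw [hLeval, hReval, ← h2, h1]
        exact Finset.sum_congr rfl fun k _ => by rw [h3 k]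
      · exact Set.infinite_range_of_injective Nat.cast_injective
    have := congrArg (Polynomial.eval a) hLR
    rwa [hLeval, hReval] at this
  -- part 1
  have part1 : ∀ j : Fin m,
      ∑ k : Fin (2 * m), B j k * v k = (Qop n m)^[(j : ℕ)] Ψ 1 := by
    intro j
    have hΨ : (Qop n m)^[(j : ℕ)] Ψ 1
        = ∏ i ∈ range (j : ℕ), ((a - 2 * i) * (a - 2 * i + n - 2 + 2 * m)) := by
      show (Qop n m)^[(j : ℕ)] (fun r : ℝ => r ^ a) 1 = _
      rw [qop_iter_cpow n m a (j : ℕ) 1 one_pos, Real.one_rpow, mul_one]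
    rw [hΨ, ← main j]
    exact Finset.sum_congr rfl fun k _ => by rw [hv k]
  have hval : ∀ j : Fin m, ∑ k : Fin (2 * m), B j k * v k
      = ∏ i ∈ range (j : ℕ), ((a - 2 * i) * (a - 2 * i + n - 2 + 2 * m)) := by
    intro j
    rw [← main j]
    exact Finset.sum_congr rfl fun k _ => by rw [hv k]
  have hpm : p < m := lt_of_le_of_lt hp (Nat.sub_lt hm one_pos)
  have hcast : ((m - 1 - p : ℕ) : ℝ) = (m : ℝ) - 1 - p := by
    have h1 : 1 + p ≤ m := by omega
    rw [Nat.sub_sub, Nat.cast_sub h1]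
    push_cast; ring
  refine ⟨part1, ?_, ?_⟩
  · intro j hj
    rw [hval j]
    apply Finset.prod_eq_zero (i := m - 1 - p)
    · rw [Finset.mem_range]; omega
    · have : a - 2 * ((m - 1 - p : ℕ) : ℝ) + n - 2 + 2 * m = 0 := by
        rw [hcast, ha]; ring
      rw [this, mul_zero]
  · intro j hj
    rw [hval j]
    apply Finset.prod_ne_zero_iff.mpr
    intro i hi
    rw [Finset.mem_range] at hi
    have hi' : i < m - 1 - p := lt_of_lt_of_le hi hj
    have hicast : (i : ℝ) < (m : ℝ) - 1 - p := by
      rw [← hcast]; exact_mod_cast hi'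
    have hn' : (1 : ℝ) ≤ n := by exact_mod_cast hn
    apply mul_ne_zero
    · have : a - 2 * i < 0 := by
        rw [ha]
        nlinarith [Nat.cast_nonneg (α := ℝ) p, Nat.cast_nonneg (α := ℝ) i]
      exact ne_of_lt this
    · have : 0 < a - 2 * i + n - 2 + 2 * m := by
        rw [ha]; nlinarith
      exact ne_of_gt this
end
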